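/- Let N be a stable phylogenetic network on X. Then the map κ_N : V⁻(N) → V(U(N))/∼, which sends a tree vertex w of N to the common value of p_{U(N)}(Ψ_N(P)) over all paths P ∈ π⁻(N) ending at w, is a well-defined bijection from the set of tree vertices of N onto V(U(N))/∼. -/

import Mathlib

/- ------------------------------------------------------------------
Common combinatorial framework for phylogenetic networks, MUL-trees,
un-fold and fold-up operations, following Huber--Moulton--Scornavacca--
Steel and the paper "Three applications of un-fold/fold-up operations
for stable phylogenetic networks".

A `Net` is a rooted directed multigraph: `arcs u v` records the number
of parallel arcs from `u` to `v`.  Directed walks are recorded as lists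
of *arc tokens* `(u, v, i)` (the `i`-th parallel arc from `u` to `v`),
so that parallel arcs give rise to different directed paths.
------------------------------------------------------------------- -/

open Classical

universe u v w

namespace Phylo

/-- A rooted directed multigraph on the vertex type `V`:  `arcs u v` is the
number of parallel arcs from `u` to `v`, `verts` is the vertex set and
`root` the root. -/
structure Net (V : Type u) where
  verts : Set V
  arcs : V → V → ℕ
  root : V

/-- An arc token: `(u, v, i)` stands for the `i`-th parallel arc from `u` to `v`. -/
abbrev Arc (V : Type u) := V × V × ℕ

namespace Net

variable {V : Type u}

/-- The arc token `a` is a genuine arc of `N`. -/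
def okArc (N : Net V) (a : Arc V) : Prop :=
  a.1 ∈ N.verts ∧ a.2.1 ∈ N.verts ∧ a.2.2 < N.arcs a.1 a.2.1

/-- `l` is a directed walk (possibly trivial) starting at the vertex `u`,
recorded as the list of its arc tokens. -/
def WalkFrom (N : Net V) (u : V) (l : List (Arc V)) : Prop :=
  u ∈ N.verts ∧ (∀ a ∈ l, N.okArc a) ∧
    List.Chain' (fun a b : Arc V => a.2.1 = b.1) l ∧
    ∀ a ∈ l.head?, (a : Arc V).1 = u

/-- The end vertex of the walk `l` starting at `u`. -/
def endOf (u : V) (l : List (Arc V)) : V := (l.getLastD (u, u, 0)).2.1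

/-- The list of vertices visited by a walk `l` starting at `u`. -/
def walkVerts (u : V) (l : List (Arc V)) : List V := u :: l.map (fun a => a.2.1)

/-- The inner (non-endpoint) vertices of a walk `l` starting at `u`. -/
def innerVerts (u : V) (l : List (Arc V)) : List V := ((walkVerts u l).dropLast).drop 1

/-- `w` is *below* `u` (there is a directed path from `u` to `w`; every
vertex is below itself).  Equivalently, `u` is an *ancestor* of `w`. -/
def Reaches (N : Net V) (u w : V) : Prop := ∃ l, N.WalkFrom u l ∧ endOf u l = w

/-- The indegree of a vertex (counting parallel arcs). -/
noncomputable def inDeg (N : Net V) (v : V) : ℕ := ∑ᶠ u, N.arcs u v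

/-- The outdegree of a vertex (counting parallel arcs). -/
noncomputable def outDeg (N : Net V) (v : V) : ℕ := ∑ᶠ u, N.arcs v u

/-- A leaf is a vertex of outdegree zero. -/
def IsLeaf (N : Net V) (v : V) : Prop := v ∈ N.verts ∧ N.outDeg v = 0

/-- An interior vertex is a non-leaf vertex. -/
def IsInterior (N : Net V) (v : V) : Prop := v ∈ N.verts ∧ N.outDeg v ≠ 0

/-- A tree vertex is a vertex of indegree at most one. -/
def IsTreeVert (N : Net V) (v : V) : Prop := v ∈ N.verts ∧ N.inDeg v ≤ 1

/-- A hybrid vertex is a vertex of indegree at least two. -/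
def IsHybrid (N : Net V) (v : V) : Prop := v ∈ N.verts ∧ 2 ≤ N.inDeg v

/-- The one-step arc relation. -/
def ArcRel (N : Net V) (u v : V) : Prop := 0 < N.arcs u v

/-- `N` contains no directed cycle. -/
def Acyclic (N : Net V) : Prop := ∀ v, ¬ Relation.TransGen N.ArcRel v v

/-- A rooted connected pseudoDAG: a finite rooted directed (multi)graph with
no directed cycles in which every vertex is reachable from the root. -/
structure IsPseudoDAG (N : Net V) : Prop where
  finite : N.verts.Finite
  rootMem : N.root ∈ N.verts
  arcMem : ∀ u v, N.arcs u v ≠ 0 → u ∈ N.verts ∧ v ∈ N.verts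
  acyclic : N.Acyclic
  connected : ∀ v ∈ N.verts, N.Reaches N.root v

/-- An `X`-network: a rooted connected pseudoDAG whose leaf set is `X`, where
the root has indegree zero, every non-leaf tree vertex has outdegree two,
every hybrid vertex has outdegree one, and every leaf has total degree one. -/
structure IsXNetwork (N : Net V) (X : Set V) extends IsPseudoDAG N : Prop where
  rootInDeg : N.inDeg N.root = 0
  leafSet : ∀ v, N.IsLeaf v ↔ v ∈ X
  treeOutDeg : ∀ v ∈ N.verts, N.inDeg v ≤ 1 → N.outDeg v ≠ 0 → N.outDeg v = 2
  hybridOutDeg : ∀ v ∈ N.verts, 2 ≤ N.inDeg v → N.outDeg v = 1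
  leafInDeg : ∀ v ∈ X, N.inDeg v = 1

/-- No parallel arcs. -/
def NoParallel (N : Net V) : Prop := ∀ u v, N.arcs u v ≤ 1

/-- A phylogenetic network on `X`: an `X`-network without parallel arcs. -/
structure IsPhyloNetwork (N : Net V) (X : Set V) extends IsXNetwork N X : Prop where
  noParallel : N.NoParallel

/-- A phylogenetic tree on `X`: a phylogenetic network with no hybrid vertices. -/
structure IsPhyloTree (N : Net V) (X : Set V) extends IsPhyloNetwork N X : Prop where
  noHybrid : ∀ v, ¬ N.IsHybrid v

/-- A vertex with indegree one and outdegree one (to be suppressed). -/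
def Suppressible (N : Net V) (v : V) : Prop :=
  v ∈ N.verts ∧ N.inDeg v = 1 ∧ N.outDeg v = 1

/-- The graph obtained from `N` by suppressing all vertices of indegree one and
outdegree one: kept vertices are the non-suppressible ones, and the number of
arcs from `u` to `w` is the number of directed paths from `u` to `w` in `N`
all of whose inner vertices are suppressible. -/
noncomputable def suppr (N : Net V) : Net V where
  verts := {v ∈ N.verts | ¬ N.Suppressible v}
  arcs := fun u w =>
    if u ∈ N.verts ∧ ¬ N.Suppressible u ∧ w ∈ N.verts ∧ ¬ N.Suppressible w then
      Set.ncard {l : List (Arc V) | N.WalkFrom u l ∧ l ≠ [] ∧ endOf u l = w ∧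
        ∀ x ∈ innerVerts u l, N.Suppressible x}
    else 0
  root := N.root

/-- `g` realizes an isomorphism of rooted multigraphs from `N` to `N'`. -/
def NetIsoVia {W : Type w} (N : Net V) (N' : Net W) (g : V → W) : Prop :=
  Set.BijOn g N.verts N'.verts ∧
    (∀ u ∈ N.verts, ∀ v ∈ N.verts, N'.arcs (g u) (g v) = N.arcs u v) ∧
    g N.root = N'.root

/-- `w` is a vertex-stable ancestor of the leaf `x`: `w` is an interior vertex
lying on every directed path from the root to `x`. -/
def IsVSAncestor (N : Net V) (w x : V) : Prop :=
  N.IsInterior w ∧ N.IsLeaf x ∧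
    ∀ l, N.WalkFrom N.root l → endOf N.root l = x → w ∈ walkVerts N.root l

/-- `N` is tree-child: every interior vertex has a child that is a tree vertex. -/
def TreeChild (N : Net V) : Prop :=
  ∀ v, N.IsInterior v → ∃ u, 0 < N.arcs v u ∧ N.IsTreeVert u

/-- `N` is compressed: no arc has both its tail and its head hybrid. -/
def Compressed (N : Net V) : Prop :=
  ∀ u v, 0 < N.arcs u v → ¬(N.IsHybrid u ∧ N.IsHybrid v)

/-- `N` is reticulation-visible: every hybrid vertex is a vertex-stable
ancestor of some leaf. -/
def RetVisible (N : Net V) (X : Set V) : Prop :=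
  ∀ h, N.IsHybrid h → ∃ x ∈ X, N.IsVSAncestor h x

/-- The set of arc tokens used by a walk. -/
def arcsOf (l : List (Arc V)) : Set (Arc V) := {a | a ∈ l}

/-- The union of the directed paths `p₁` and `p₂` contains a subgraph that is
a reticulation cycle of `N`, i.e. the union of two arc-disjoint non-trivial
directed paths of `N` with the same start vertex and the same end vertex. -/
def ContainsRetCycle (N : Net V) (p₁ p₂ : List (Arc V)) : Prop :=
  ∃ (q₁ q₂ : List (Arc V)) (s e : V),
    N.WalkFrom s q₁ ∧ N.WalkFrom s q₂ ∧ q₁ ≠ [] ∧ q₂ ≠ [] ∧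
    endOf s q₁ = e ∧ endOf s q₂ = e ∧
    Disjoint (arcsOf q₁) (arcsOf q₂) ∧
    arcsOf q₁ ∪ arcsOf q₂ ⊆ arcsOf p₁ ∪ arcsOf p₂

/-- The set of vertices having a descendant in `Y`. -/
def keepSet (N : Net V) (Y : Set V) : Set V := {v ∈ N.verts | ∃ y ∈ Y, N.Reaches v y}

/-- The result of the leaf-removing operations applied to all leaves outside
`Y`: restrict to the vertices having a descendant in `Y` and suppress all
resulting vertices of indegree one and outdegree one. -/
noncomputable def restrictNet (N : Net V) (Y : Set V) : Net V :=
  Net.suppr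
    { verts := N.keepSet Y
      arcs := fun u w => if u ∈ N.keepSet Y ∧ w ∈ N.keepSet Y then N.arcs u w else 0
      root := N.root }

end Net

/-- A labelled rooted directed multigraph: the data of a MUL-tree on the
label set: `lab x` is the set of leaves labelled `x`. -/
structure LNet (V : Type u) (L : Type v) extends Net V where
  lab : L → Set V

namespace LNet

variable {V : Type u} {L : Type v}

/-- `M` is a MUL-tree on `X`: a rooted tree whose root has indegree `0`, with
no vertex of indegree one and outdegree one, in which every leaf carries
exactly one label from `X` and every label of `X` occurs. -/
structure IsMulTree (M : LNet V L) (X : Set L) : Prop where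
  pseudo : M.toNet.IsPseudoDAG
  rootInDeg : M.toNet.inDeg M.root = 0
  inDegOne : ∀ v ∈ M.verts, v ≠ M.root → M.toNet.inDeg v = 1
  noSupp : ∀ v, ¬ M.toNet.Suppressible v
  labLeaf : ∀ x ∈ X, ∀ l ∈ M.lab x, M.toNet.IsLeaf l
  labNonempty : ∀ x ∈ X, (M.lab x).Nonempty
  labCover : ∀ l, M.toNet.IsLeaf l → ∃! x, x ∈ X ∧ l ∈ M.lab x
  labOff : ∀ x, x ∉ X → M.lab x = ∅

/-- The set of vertices below `v`. -/
def belowSet (M : LNet V L) (v : V) : Set V := {w | M.toNet.Reaches v w}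

/-- The subMUL-tree `M_v` of `M` rooted at the vertex `v` (delete the incoming
arc of `v` and restrict the labelling). -/
noncomputable def subAt (M : LNet V L) (v : V) : LNet V L where
  verts := M.belowSet v
  arcs := fun u w => if u ∈ M.belowSet v ∧ w ∈ M.belowSet v then M.arcs u w else 0
  root := v
  lab := fun x => M.lab x ∩ M.belowSet v

/-- `η` realizes an isomorphism of MUL-trees (same label type). -/
def MulIsoVia {V' : Type w} (M : LNet V L) (M' : LNet V' L) (η : V → V') : Prop :=
  Set.BijOn η M.verts M'.verts ∧
    (∀ u ∈ M.verts, ∀ w ∈ M.verts, M'.arcs (η u) (η w) = M.arcs u w) ∧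
    η M.root = M'.root ∧
    ∀ x : L, η '' (M.lab x ∩ M.verts) = M'.lab x ∩ M'.verts

/-- Two labelled trees (on the same label type) are isomorphic. -/
def MulIso {V' : Type w} (M : LNet V L) (M' : LNet V' L) : Prop := ∃ η, MulIsoVia M M' η

/-- `η` realizes an isomorphism of MUL-trees on `X` modulo the label
translation `e`. -/
def MulIsoRelVia {V' : Type w} {L' : Type*} (M : LNet V L) (X : Set L)
    (M' : LNet V' L') (e : L → L') (η : V → V') : Prop :=
  Set.BijOn η M.verts M'.verts ∧
    (∀ u ∈ M.verts, ∀ w ∈ M.verts, M'.arcs (η u) (η w) = M.arcs u w) ∧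
    η M.root = M'.root ∧
    ∀ x ∈ X, η '' (M.lab x ∩ M.verts) = M'.lab (e x) ∩ M'.verts

/-- The equivalence relation `∼`: `u ∼ w` iff `u = w` or the subMUL-trees
`M_u` and `M_w` are isomorphic. -/
def Sim (M : LNet V L) (u w : V) : Prop := u = w ∨ MulIso (M.subAt u) (M.subAt w)

/-- The `∼`-equivalence class of `w`; the map `eqClass M : V(M) → V(M)/∼`
plays the role of the projection `p_M` onto the quotient. -/
def eqClass (M : LNet V L) (w : V) : Set V := {u ∈ M.verts | M.Sim u w}

/-- The quotient `V(M)/∼`, realized as the set of `∼`-equivalence classes. -/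
def classSet (M : LNet V L) : Set (Set V) := M.eqClass '' M.verts

/-- `c` is a `∼`-equivalence class of `M`. -/
def IsClassOf (M : LNet V L) (c : Set V) : Prop := ∃ w ∈ M.verts, c = M.eqClass w

/-- The class `c` gets a hybrid vertex above it in the fold-up of `M`:
some (equivalently, any) member of `c` has its parent in a strictly smaller
`∼`-class. -/
def ClassHyb (M : LNet V L) (c : Set V) : Prop :=
  ∃ w ∈ M.verts, c = M.eqClass w ∧ ∃ u, 0 < M.arcs u w ∧ (M.eqClass u).ncard < c.ncard

/-- `d` is the class of a parent of a member of `c`. -/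
def IsParentClassOf (M : LNet V L) (d c : Set V) : Prop :=
  ∃ u w, 0 < M.arcs u w ∧ d = M.eqClass u ∧ c = M.eqClass w

/-- The number of children inside `c` of a member of `d`. -/
noncomputable def childMult (M : LNet V L) (d c : Set V) : ℕ :=
  sSup {n : ℕ | ∃ u ∈ d, n = ∑ᶠ w ∈ c, M.arcs u w}

/-- The fold-up `F(M)` of the MUL-tree `M`: the `X`-network obtained by
repeatedly identifying all maximal inextendible subMUL-trees, subdividing
the incoming arcs of their roots and identifying the subdivision vertices.
Concretely, its tree vertices are the `∼`-classes of `M`, there is a hybrid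
vertex above each class whose members have parents in a strictly smaller
class, and arcs are induced by the arcs of `M`. -/
noncomputable def foldUp (M : LNet V L) : Net (Set V ⊕ Set V) where
  verts := (Sum.inl '' {c | M.IsClassOf c}) ∪
    (Sum.inr '' {c | M.IsClassOf c ∧ M.ClassHyb c})
  arcs := fun a b =>
    match a, b with
    | Sum.inl d, Sum.inl c =>
        if M.IsClassOf d ∧ M.IsClassOf c ∧ ¬ M.ClassHyb c ∧ M.IsParentClassOf d c
        then 1 else 0
    | Sum.inl d, Sum.inr c =>
        if M.IsClassOf d ∧ M.IsClassOf c ∧ M.ClassHyb c ∧ M.IsParentClassOf d c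
        then M.childMult d c else 0
    | Sum.inr c, Sum.inl c' =>
        if c' = c ∧ M.IsClassOf c ∧ M.ClassHyb c then 1 else 0
    | Sum.inr _, Sum.inr _ => 0
  root := Sum.inl (M.eqClass M.root)

/-- The `∼`-class of the leaves labelled `x`. -/
def labClass (M : LNet V L) (x : L) : Set V := {w ∈ M.verts | ∃ l ∈ M.lab x, M.Sim w l}

/-- The leaf set of the fold-up of `M`, identified with `X`. -/
def foldX (M : LNet V L) (X : Set L) : Set (Set V ⊕ Set V) :=
  (fun x => Sum.inl (M.labClass x)) '' X

/-- A MUL-tree is sound if its fold-up is a phylogenetic network. -/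
def IsSound (M : LNet V L) (X : Set L) : Prop :=
  M.IsMulTree X ∧ Net.IsPhyloNetwork M.foldUp (M.foldX X)

/-- An `X`-set of `M`: a set of leaves containing exactly one leaf labelled
`x` for every `x ∈ X`. -/
def IsXSet (M : LNet V L) (X : Set L) (C : Set V) : Prop :=
  (∀ l ∈ C, M.toNet.IsLeaf l) ∧ ∀ x ∈ X, ∃! l, l ∈ C ∧ l ∈ M.lab x

/-- `r` is the last common ancestor of the elements of `C`. -/
def IsLca (M : LNet V L) (r : V) (C : Set V) : Prop :=
  r ∈ M.verts ∧ (∀ c ∈ C, M.toNet.Reaches r c) ∧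
    ∀ r' ∈ M.verts, (∀ c ∈ C, M.toNet.Reaches r' c) → M.toNet.Reaches r' r

/-- The last common ancestor `r_C` of the elements of `C`. -/
noncomputable def lcaOf [Nonempty V] (M : LNet V L) (C : Set V) : V :=
  Classical.epsilon fun r => M.IsLca r C

/-- The vertex set of `M_C⁺`: all vertices on a directed path from
`lca(C)` to a leaf in `C`. -/
def subPlusVerts [Nonempty V] (M : LNet V L) (C : Set V) : Set V :=
  {v | M.toNet.Reaches (M.lcaOf C) v ∧ ∃ c ∈ C, M.toNet.Reaches v c}

/-- The tree `M_C⁺` spanned by the leaves in `C`; the canonical injection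
`ξ_C⁺ : V(M_C⁺) → V(M)` is the set-inclusion `subPlusVerts M C ⊆ V`, so that
the map `ξ̄_C⁺ = p_M ∘ ξ_C⁺` is realized by `eqClass M` restricted to
`subPlusVerts M C`. -/
noncomputable def subPlus [Nonempty V] (M : LNet V L) (C : Set V) : Net V where
  verts := M.subPlusVerts C
  arcs := fun u w => if u ∈ M.subPlusVerts C ∧ w ∈ M.subPlusVerts C then M.arcs u w else 0
  root := M.lcaOf C

/-- The phylogenetic tree `M_C` induced by the `X`-set `C`: suppress all
vertices of indegree one and outdegree one in `M_C⁺`. -/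
noncomputable def mC [Nonempty V] (M : LNet V L) (C : Set V) : Net V := (M.subPlus C).suppr

/-- The set `V(M)^C`: the vertex `r_C` together with all vertices `v` such
that no vertex below `v` is `∼`-equivalent to `r_C`. -/
def vmc [Nonempty V] (M : LNet V L) (C : Set V) : Set V :=
  insert (M.lcaOf C) {v ∈ M.verts | ∀ u, M.toNet.Reaches v u → ¬ M.Sim u (M.lcaOf C)}

/-- Vertices of `M` having a descendant leaf labelled by an element of `Y`. -/
def keepSet (M : LNet V L) (Y : Set L) : Set V :=
  {v ∈ M.verts | ∃ w, M.toNet.Reaches v w ∧ ∃ y ∈ Y, w ∈ M.lab y}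

/-- The MUL-tree `M_Y` obtained from `M` by the leaf-removing operation:
remove all leaves labelled outside `Y` (together with everything having no
leaf labelled in `Y` below it) and suppress all resulting vertices of
indegree one and outdegree one. -/
noncomputable def restrictMul (M : LNet V L) (Y : Set L) : LNet V L where
  toNet := Net.suppr
    { verts := M.keepSet Y
      arcs := fun u w => if u ∈ M.keepSet Y ∧ w ∈ M.keepSet Y then M.arcs u w else 0
      root := M.root }
  lab := fun y => if y ∈ Y then M.lab y else ∅

end LNet

namespace Net

variable {V : Type u}

/-- The vertex set of the un-fold `U(N)` of `N`: the set `π⁻(N)` of directed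
paths of `N` starting at the root and ending in a tree vertex.  (The
bijection `Ψ_N : π⁻(N) → V(U(N))` is thereby realized as the identity.) -/
def unfoldVerts (N : Net V) : Set (List (Arc V)) :=
  {p | N.WalkFrom N.root p ∧ N.IsTreeVert (endOf N.root p)}

/-- The un-fold `U(N)` of `N`, a MUL-tree on `X`: vertices are the directed
paths from the root ending in tree vertices, arcs correspond to extending
such a path by a single arc followed by a (possibly empty) run of hybrid
vertices, and the leaves labelled `x ∈ X` are the paths ending in `x`. -/
noncomputable def unfoldNet (N : Net V) (X : Set V) : LNet (List (Arc V)) V where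
  verts := unfoldVerts N
  arcs := fun p q =>
    if p ∈ unfoldVerts N ∧ q ∈ unfoldVerts N ∧
        ∃ r, r ≠ [] ∧ q = p ++ r ∧ ∀ a ∈ r.dropLast, N.IsHybrid (a : Arc V).2.1
    then 1 else 0
  root := []
  lab := fun x => if x ∈ X then {p ∈ unfoldVerts N | endOf N.root p = x} else ∅

end Net

/-- `N` is a stable phylogenetic network on `X`: `N` is a phylogenetic
network isomorphic to the fold-up of its un-fold, via an isomorphism fixing
`X` pointwise (i.e. sending each leaf `x` to the leaf of `F(U(N))`
corresponding to `x`). -/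
def IsStable {V : Type u} (N : Net V) (X : Set V) : Prop :=
  Net.IsPhyloNetwork N X ∧
    ∃ g, Net.NetIsoVia N (Net.unfoldNet N X).foldUp g ∧
      ∀ x ∈ X, g x = Sum.inl ((Net.unfoldNet N X).labClass x)

/-- `T` is endorsed by the MUL-tree `M` via the `X`-set `C`, the isomorphism
`T ≅ M_C` being realized by `σ` (which sends each `x ∈ X` to the unique leaf
of `C` labelled `x`). -/
def EndorsedVia {V : Type u} {W : Type w} [Nonempty W] (T : Net V) (X : Set V)
    (M : LNet W V) (C : Set W) (σ : V → W) : Prop :=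
  M.IsXSet X C ∧ Net.NetIsoVia T (M.mC C) σ ∧ ∀ x ∈ X, σ x ∈ C ∧ σ x ∈ M.lab x

/-- `T` is endorsed by the MUL-tree `M` via the `X`-set `C`. -/
def Endorsed {V : Type u} {W : Type w} [Nonempty W] (T : Net V) (X : Set V)
    (M : LNet W V) (C : Set W) : Prop :=
  ∃ σ, EndorsedVia T X M C σ

/-- `N'` is a subgraph of `N` with leaf set `X` which is (an isomorphic copy,
via the identity on `X`, of) a subdivision of `T`: suppressing all vertices
of indegree one and outdegree one in `N'` yields a tree isomorphic to `T`
via an isomorphism `g` fixing `X` pointwise. -/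
def IsDisplayWitness {V : Type u} (N : Net V) (X : Set V) (T : Net V)
    (N' : Net V) (g : V → V) : Prop :=
  N'.verts ⊆ N.verts ∧ (∀ u v, N'.arcs u v ≤ N.arcs u v) ∧
    N'.root ∈ N'.verts ∧ (∀ v ∈ N'.verts, N'.Reaches N'.root v) ∧
    (∀ v, N'.IsLeaf v ↔ v ∈ X) ∧
    Net.NetIsoVia T N'.suppr g ∧ ∀ x ∈ X, g x = x

/-- The phylogenetic tree `T` is displayed by `N`. -/
def Displays {V : Type u} (N : Net V) (X : Set V) (T : Net V) : Prop :=
  ∃ N' g, IsDisplayWitness N X T N' g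

/-- The phylogenetic tree `T` is strongly displayed by `N`: it is displayed
via a subdivision whose root is the root of `N`. -/
def StronglyDisplays {V : Type u} (N : Net V) (X : Set V) (T : Net V) : Prop :=
  ∃ N' g, IsDisplayWitness N X T N' g ∧ N'.root = N.root

/-- `G` is a rooted tree. -/
structure IsRootedTree {V : Type u} (G : Net V) : Prop where
  pseudo : G.IsPseudoDAG
  rootInDeg : G.inDeg G.root = 0
  inDegOne : ∀ v ∈ G.verts, v ≠ G.root → G.inDeg v = 1

/-- `T'` is a subdivision of `T` (with the identity on `X`): `T'` is a rooted
tree which, after suppressing all vertices of indegree one and outdegree one,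
is isomorphic to `T` via an isomorphism fixing `X` pointwise. -/
def IsSubdivisionOf {V : Type u} (T' T : Net V) (X : Set V) : Prop :=
  IsRootedTree T' ∧ ∃ g, Net.NetIsoVia T T'.suppr g ∧ ∀ x ∈ X, g x = x

/-- `T` is a base tree for `N`: `N` can be obtained from `T` by subdividing
some arcs of `T`, adding arcs between the subdivision vertices without
creating parallel arcs or directed cycles, and suppressing all subdivision
vertices still of indegree one and outdegree one. -/
def IsBaseTreeFor {V : Type u} (T : Net V) (X : Set V) (N : Net V) : Prop :=
  ∃ T' G : Net V,
    IsSubdivisionOf T' T X ∧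
    G.verts = T'.verts ∧ G.root = T'.root ∧
    (∀ u v, T'.arcs u v ≤ G.arcs u v) ∧
    (∀ u v, T'.arcs u v ≠ G.arcs u v → T'.Suppressible u ∧ T'.Suppressible v) ∧
    G.NoParallel ∧ G.Acyclic ∧
    ∃ h, Net.NetIsoVia G.suppr N h ∧ ∀ x ∈ X, h x = x

end Phylo
namespace Phylo

variable {V : Type u}

/- ### Generic finsum helpers -/

lemma finsum_two_le {α : Type*} (f : α → ℕ) (hf : (Function.support f).Finite)
    {a b : α} (hab : a ≠ b) : f a + f b ≤ ∑ᶠ x, f x := by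
  classical
  have hsub : Function.support f ⊆ ↑(hf.toFinset ∪ {a, b}) := by
    intro x hx
    simp only [Finset.coe_union, Set.mem_union, Finset.coe_insert, Finset.coe_singleton]
    exact Or.inl (by simpa using hx)
  rw [finsum_eq_finset_sum_of_support_subset f hsub]
  have hpair : ({a, b} : Finset α) ⊆ hf.toFinset ∪ {a, b} := Finset.subset_union_right
  calc f a + f b = ∑ x ∈ ({a, b} : Finset α), f x := (Finset.sum_pair hab).symm
    _ ≤ _ := Finset.sum_le_sum_of_subset hpair

lemma finsum_mem_single_le {α : Type*} (f : α → ℕ) {c : Set α} (hc : c.Finite)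
    {a : α} (ha : a ∈ c) : f a ≤ ∑ᶠ w ∈ c, f w := by
  rw [finsum_mem_def]
  have h1 : (Function.support (c.indicator f)).Finite :=
    hc.subset Set.support_indicator_subset
  have := single_le_finsum a h1 (fun j => Nat.zero_le _)
  rwa [Set.indicator_of_mem ha] at this

lemma finsum_mem_two_le {α : Type*} (f : α → ℕ) {c : Set α} (hc : c.Finite)
    {a b : α} (ha : a ∈ c) (hb : b ∈ c) (hab : a ≠ b) :
    f a + f b ≤ ∑ᶠ w ∈ c, f w := by
  rw [finsum_mem_def]
  have h1 : (Function.support (c.indicator f)).Finite :=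
    hc.subset Set.support_indicator_subset
  have := finsum_two_le (c.indicator f) h1 hab
  rwa [Set.indicator_of_mem ha, Set.indicator_of_mem hb] at this

lemma finsum_mem_le_ncard {α : Type*} (f : α → ℕ) {c : Set α} (hc : c.Finite)
    (h1 : ∀ w, f w ≤ 1) : (∑ᶠ w ∈ c, f w) ≤ c.ncard := by
  have hfin : (c ∩ Function.support f).Finite := hc.subset Set.inter_subset_left
  rw [finsum_mem_eq_sum f hfin]
  calc ∑ w ∈ hfin.toFinset, f w ≤ ∑ _w ∈ hfin.toFinset, 1 :=
        Finset.sum_le_sum fun w _ => h1 w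
    _ = hfin.toFinset.card := by simp
    _ ≤ hc.toFinset.card := Finset.card_le_card (by
        intro x hx
        rw [Set.Finite.mem_toFinset] at hx ⊢
        exact hx.1)
    _ = c.ncard := (Set.ncard_eq_toFinset_card c hc).symm

/- ### Lists of bounded length over a finite set -/

lemma finite_lists_of_le {α : Type*} {A : Set α} (hA : A.Finite) :
    ∀ n, {l : List α | l.length ≤ n ∧ ∀ a ∈ l, a ∈ A}.Finite := by
  intro n
  induction n with
  | zero =>
    apply Set.Finite.subset (Set.finite_singleton ([] : List α))
    rintro l ⟨hl, -⟩
    simp only [Nat.le_zero, List.length_eq_zero_iff] at hl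
    simp [hl]
  | succ n ih =>
    apply Set.Finite.subset
      (Set.Finite.insert [] ((hA.prod ih).image (fun p : α × List α => p.1 :: p.2)))
    rintro l ⟨hl, hm⟩
    cases l with
    | nil => exact Set.mem_insert _ _
    | cons a t =>
      refine Set.mem_insert_iff.mpr (Or.inr ⟨(a, t), ⟨hm a List.mem_cons_self, ?_, ?_⟩, rfl⟩)
      · simpa using Nat.succ_le_succ_iff.mp (by simpa using hl)
      · exact fun b hb => hm b (List.mem_cons_of_mem _ hb)

namespace Net

variable {N : Net V}

/- ### Walk basics -/

lemma endOf_nil (u : V) : endOf u ([] : List (Arc V)) = u := rfl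

lemma endOf_cons (u : V) (a : Arc V) (l : List (Arc V)) :
    endOf u (a :: l) = endOf a.2.1 l := by
  cases l with
  | nil => simp [endOf]
  | cons b t => simp only [endOf, List.getLastD_cons]

lemma endOf_append (u : V) (l₁ l₂ : List (Arc V)) :
    endOf u (l₁ ++ l₂) = endOf (endOf u l₁) l₂ := by
  induction l₁ generalizing u with
  | nil => simp [endOf_nil]
  | cons a t ih => rw [List.cons_append, endOf_cons, endOf_cons, ih]

lemma endOf_concat (u : V) (l : List (Arc V)) (a : Arc V) :
    endOf u (l ++ [a]) = a.2.1 := by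
  simp [endOf, List.getLastD_concat]

lemma endOf_take_succ {u : V} {l : List (Arc V)} {i : ℕ} (hi : i < l.length) :
    endOf u (l.take (i + 1)) = (l[i]'hi).2.1 := by
  have h1 : l.take (i + 1) = l.take i ++ [l[i]'hi] := by
    rw [List.take_succ, List.getElem?_eq_getElem hi]; rfl
  rw [h1, endOf_concat]

lemma getLastD_mem {α : Type*} {l : List α} (d : α) (h : l ≠ []) : l.getLastD d ∈ l := by
  rw [List.getLastD_eq_getLast?, List.getLast?_eq_getLast h]
  exact List.getLast_mem h

lemma walkFrom_nil {u : V} (hu : u ∈ N.verts) : N.WalkFrom u [] :=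
  ⟨hu, by simp, by exact List.isChain_nil, by simp⟩

lemma reaches_refl {u : V} (hu : u ∈ N.verts) : N.Reaches u u :=
  ⟨[], walkFrom_nil hu, rfl⟩

lemma walkFrom_cons {u : V} {a : Arc V} {l : List (Arc V)} :
    N.WalkFrom u (a :: l) ↔ u ∈ N.verts ∧ a.1 = u ∧ N.okArc a ∧ N.WalkFrom a.2.1 l := by
  constructor
  · rintro ⟨hu, hok, hch, hh⟩
    have hok_a := hok a List.mem_cons_self
    refine ⟨hu, hh a rfl, hok_a, hok_a.2.1,
      fun b hb => hok b (List.mem_cons_of_mem _ hb),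
      (List.isChain_cons.mp hch).2, ?_⟩
    intro b hb
    exact ((List.isChain_cons.mp hch).1 b hb).symm
  · rintro ⟨hu, ha, hok, hv, hok', hch, hh⟩
    refine ⟨hu, ?_, List.isChain_cons.mpr ⟨fun b hb => (hh b hb).symm, hch⟩, ?_⟩
    · rintro b hb
      rcases List.mem_cons.mp hb with rfl | hb
      exacts [hok, hok' b hb]
    · intro b hb
      simp only [List.head?_cons, Option.mem_def, Option.some.injEq] at hb
      subst hb; exact ha

lemma walkFrom_append {u : V} {l₁ l₂ : List (Arc V)} :
    N.WalkFrom u (l₁ ++ l₂) ↔ N.WalkFrom u l₁ ∧ N.WalkFrom (endOf u l₁) l₂ := by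
  induction l₁ generalizing u with
  | nil =>
    simp only [List.nil_append, endOf_nil]
    constructor
    · intro h; exact ⟨walkFrom_nil h.1, h⟩
    · exact fun h => h.2
  | cons a t ih =>
    rw [List.cons_append, walkFrom_cons, walkFrom_cons, endOf_cons, ih]
    tauto

lemma WalkFrom.take {u : V} {l : List (Arc V)} (h : N.WalkFrom u l) (n : ℕ) :
    N.WalkFrom u (l.take n) := by
  have := (walkFrom_append (N := N) (u := u) (l₁ := l.take n) (l₂ := l.drop n))
  rw [List.take_append_drop] at this
  exact (this.mp h).1

lemma WalkFrom.endOf_mem {u : V} {l : List (Arc V)} (h : N.WalkFrom u l) :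
    endOf u l ∈ N.verts := by
  rcases eq_or_ne l [] with rfl | hl
  · exact h.1
  · have hmem : l.getLastD (u, u, 0) ∈ l := getLastD_mem _ hl
    exact (h.2.1 _ hmem).2.1

lemma transGen_of_walk {u : V} {l : List (Arc V)} (h : N.WalkFrom u l) (hne : l ≠ []) :
    Relation.TransGen N.ArcRel u (endOf u l) := by
  induction l generalizing u with
  | nil => exact absurd rfl hne
  | cons a t ih =>
    rw [walkFrom_cons] at h
    obtain ⟨hu, ha, hok, hw⟩ := h
    have h1 : N.ArcRel u a.2.1 := by
      have : 0 < N.arcs a.1 a.2.1 := Nat.lt_of_le_of_lt (Nat.zero_le _) hok.2.2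
      rwa [ha] at this
    rcases eq_or_ne t [] with rfl | ht
    · rw [endOf_cons, endOf_nil]
      exact Relation.TransGen.single h1
    · rw [endOf_cons]
      exact (ih hw ht).head h1

lemma walk_nodup (hac : N.Acyclic) {u : V} {l : List (Arc V)} (h : N.WalkFrom u l) :
    l.Nodup := by
  by_contra hnd
  rw [List.nodup_iff_injective_get] at hnd
  rw [Function.Injective] at hnd
  push_neg at hnd
  obtain ⟨i, j, hij, hne⟩ := hnd
  -- wlog i < j
  rcases Nat.lt_or_ge i.1 j.1 with hlt | hge
  case _ =>
    have hjlen : (j : ℕ) < l.length := j.2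
    have hwalk1 : N.WalkFrom u (l.take ((j : ℕ) + 1)) := h.take _
    have hsplit := (walkFrom_append (N := N) (u := u)
      (l₁ := (l.take ((j : ℕ)+1)).take ((i : ℕ)+1))
      (l₂ := (l.take ((j : ℕ)+1)).drop ((i : ℕ)+1)))
    rw [List.take_append_drop] at hsplit
    have h2 := (hsplit.mp hwalk1).2
    have htt : (l.take ((j : ℕ)+1)).take ((i : ℕ)+1) = l.take ((i : ℕ)+1) := by
      rw [List.take_take]; congr 1; omega
    have he1 : endOf u ((l.take ((j : ℕ)+1)).take ((i : ℕ)+1)) = (l.get i).2.1 := by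
      rw [htt]
      have : (i : ℕ) < l.length := i.2
      simpa [List.get_eq_getElem] using endOf_take_succ (u := u) this
    have he2 : endOf u (l.take ((j : ℕ)+1)) = (l.get j).2.1 := by
      simpa [List.get_eq_getElem] using endOf_take_succ (u := u) hjlen
    have hcong : endOf (endOf u ((l.take ((j : ℕ)+1)).take ((i : ℕ)+1)))
        ((l.take ((j : ℕ)+1)).drop ((i : ℕ)+1)) = (l.get j).2.1 := by
      rw [← endOf_append, List.take_append_drop]
      exact he2
    have hddne : (l.take ((j : ℕ)+1)).drop ((i : ℕ)+1) ≠ [] := by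
      apply List.ne_nil_of_length_pos
      rw [List.length_drop, List.length_take]
      omega
    have := transGen_of_walk h2 hddne
    rw [hcong, he1, ← hij] at this
    exact hac _ this
  case _ =>
    have hji : (j : ℕ) < i.1 := by
      rcases Nat.lt_or_ge (j : ℕ) i.1 with h' | h'
      · exact h'
      · exfalso; exact hne (Fin.ext (by omega))
    -- symmetric case: swap roles
    have hilen : (i : ℕ) < l.length := i.2
    have hwalk1 : N.WalkFrom u (l.take ((i : ℕ) + 1)) := h.take _
    have hsplit := (walkFrom_append (N := N) (u := u)
      (l₁ := (l.take ((i : ℕ)+1)).take ((j : ℕ)+1))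
      (l₂ := (l.take ((i : ℕ)+1)).drop ((j : ℕ)+1)))
    rw [List.take_append_drop] at hsplit
    have h2 := (hsplit.mp hwalk1).2
    have htt : (l.take ((i : ℕ)+1)).take ((j : ℕ)+1) = l.take ((j : ℕ)+1) := by
      rw [List.take_take]; congr 1; omega
    have he1 : endOf u ((l.take ((i : ℕ)+1)).take ((j : ℕ)+1)) = (l.get j).2.1 := by
      rw [htt]
      have : (j : ℕ) < l.length := j.2
      simpa [List.get_eq_getElem] using endOf_take_succ (u := u) this
    have he2 : endOf u (l.take ((i : ℕ)+1)) = (l.get i).2.1 := by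
      simpa [List.get_eq_getElem] using endOf_take_succ (u := u) hilen
    have hcong : endOf (endOf u ((l.take ((i : ℕ)+1)).take ((j : ℕ)+1)))
        ((l.take ((i : ℕ)+1)).drop ((j : ℕ)+1)) = (l.get i).2.1 := by
      rw [← endOf_append, List.take_append_drop]
      exact he2
    have hddne : (l.take ((i : ℕ)+1)).drop ((j : ℕ)+1) ≠ [] := by
      apply List.ne_nil_of_length_pos
      rw [List.length_drop, List.length_take]
      omega
    have := transGen_of_walk h2 hddne
    rw [hcong, he1, hij] at this
    exact hac _ this

end Net

end Phylo

namespace Phylo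

variable {V : Type u}

namespace Net

variable {N : Net V}

/- ### Finiteness of the un-fold vertex set -/

lemma okArc_finite (hfin : N.verts.Finite) : {a : Arc V | N.okArc a}.Finite := by
  have hsub : {a : Arc V | N.okArc a} ⊆
      ⋃ u ∈ N.verts, ⋃ v ∈ N.verts, (fun i => (u, v, i)) '' Set.Iio (N.arcs u v) := by
    rintro ⟨u, v, i⟩ ⟨h1, h2, h3⟩
    exact Set.mem_biUnion h1 (Set.mem_biUnion h2 ⟨i, h3, rfl⟩)
  exact Set.Finite.subset
    (hfin.biUnion fun u _ => hfin.biUnion fun v _ => (Set.finite_Iio _).image _) hsub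

lemma arc_pos_inDeg (hfin : N.verts.Finite)
    (hmem : ∀ u v, N.arcs u v ≠ 0 → u ∈ N.verts ∧ v ∈ N.verts)
    {u v : V} (h : 0 < N.arcs u v) : 0 < N.inDeg v := by
  have hsupp : (Function.support fun w => N.arcs w v).Finite :=
    hfin.subset fun w hw => (hmem w v hw).1
  have := single_le_finsum u hsupp (fun j => Nat.zero_le _)
  exact Nat.lt_of_lt_of_le h this

lemma unfoldVerts_finite (hfin : N.verts.Finite) (hac : N.Acyclic) :
    N.unfoldVerts.Finite := by
  have hA := okArc_finite hfin
  apply Set.Finite.subset (finite_lists_of_le hA hA.toFinset.card)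
  rintro l ⟨hw, -⟩
  have hnd := walk_nodup hac hw
  have hmem : ∀ a ∈ l, a ∈ {a : Arc V | N.okArc a} := hw.2.1
  refine ⟨?_, hmem⟩
  classical
  have hsub : l.toFinset ⊆ hA.toFinset := fun a ha =>
    hA.mem_toFinset.mpr (hmem a (List.mem_toFinset.mp ha))
  calc l.length = l.toFinset.card := (List.toFinset_card_of_nodup hnd).symm
    _ ≤ _ := Finset.card_le_card hsub

/- ### Basic facts about the un-fold -/

variable {X : Set V}

lemma unfold_verts : (N.unfoldNet X).verts = N.unfoldVerts := rfl

lemma unfold_arcs_le_one (p q : List (Arc V)) : (N.unfoldNet X).arcs p q ≤ 1 := by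
  show (if _ then 1 else 0) ≤ 1
  split <;> omega

lemma unfold_arcs_pos_iff {p q : List (Arc V)} :
    0 < (N.unfoldNet X).arcs p q ↔
      p ∈ N.unfoldVerts ∧ q ∈ N.unfoldVerts ∧
        ∃ r, r ≠ [] ∧ q = p ++ r ∧ ∀ a ∈ r.dropLast, N.IsHybrid (a : Arc V).2.1 := by
  show 0 < (if _ then 1 else 0) ↔ _
  split
  · rename_i hc; exact iff_of_true Nat.one_pos hc
  · rename_i hc; exact iff_of_false (by omega) hc

lemma unfold_lab_mem {x : V} (hx : x ∈ X) (l : List (Arc V)) :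
    l ∈ (N.unfoldNet X).lab x ↔ l ∈ N.unfoldVerts ∧ endOf N.root l = x := by
  show l ∈ (if x ∈ X then _ else _) ↔ _
  rw [if_pos hx]
  rfl

lemma unfold_lab_off {x : V} (hx : x ∉ X) : (N.unfoldNet X).lab x = ∅ := by
  show (if x ∈ X then _ else _) = _
  rw [if_neg hx]

lemma nil_mem_unfoldVerts (hN : N.IsPseudoDAG) (hroot : N.inDeg N.root = 0) :
    [] ∈ N.unfoldVerts := by
  refine ⟨walkFrom_nil hN.rootMem, ?_, ?_⟩ <;> rw [endOf_nil]
  · exact hN.rootMem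
  · rw [hroot]; omega

lemma mem_below_unfold {p : List (Arc V)} (hp : p ∈ N.unfoldVerts) :
    ∀ {L : List (Arc (List (Arc V)))} {l : List (Arc V)},
      (N.unfoldNet X).toNet.WalkFrom p L → endOf p L = l →
        l ∈ N.unfoldVerts ∧ p <+: l := by
  intro L
  induction L generalizing p with
  | nil =>
    intro l _ he
    rw [endOf_nil] at he
    exact he ▸ ⟨hp, List.prefix_refl p⟩
  | cons a t ih =>
    intro l hw he
    rw [walkFrom_cons] at hw
    obtain ⟨-, ha, hok, hw'⟩ := hw
    have hpos : 0 < (N.unfoldNet X).arcs p a.2.1 := by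
      have := hok.2.2
      rw [ha] at this
      omega
    rw [unfold_arcs_pos_iff] at hpos
    obtain ⟨-, hmem, r, -, hqr, -⟩ := hpos
    rw [endOf_cons] at he
    obtain ⟨h1, h2⟩ := ih hmem hw' he
    exact ⟨h1, List.IsPrefix.trans ⟨r, hqr.symm⟩ h2⟩

lemma reaches_of_prefix (X : Set V) (hN : N.IsPseudoDAG) :
    ∀ (n : ℕ) (p l : List (Arc V)), p ∈ N.unfoldVerts → l ∈ N.unfoldVerts → p <+: l →
      l.length ≤ p.length + n → (N.unfoldNet X).toNet.Reaches p l := by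
  intro n
  induction n with
  | zero =>
    intro p l hp _ hpre hlen
    have hpl : p = l := hpre.eq_of_length (le_antisymm hpre.length_le (by omega))
    subst hpl
    exact reaches_refl hp
  | succ n ih =>
    intro p l hp hl hpre hlen
    rcases eq_or_ne p l with rfl | hne
    · exact reaches_refl hp
    obtain ⟨s, rfl⟩ := hpre
    have hs : s ≠ [] := by rintro rfl; exact hne (by simp)
    have hslen : 1 ≤ s.length := List.length_pos_iff.mpr hs
    have hPex : ∃ k, (k + 1 = s.length ∨ N.IsTreeVert (endOf N.root (p ++ s.take (k + 1)))) :=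
      ⟨s.length - 1, Or.inl (by omega)⟩
    have hk₀ := Nat.find_spec hPex
    set k₀ := Nat.find hPex with hk₀def
    have hk₀le : k₀ + 1 ≤ s.length := by
      have := Nat.find_min' hPex (m := s.length - 1) (Or.inl (by omega))
      omega
    set r := s.take (k₀ + 1) with hrdef
    have hrlen : r.length = k₀ + 1 := by rw [hrdef, List.length_take]; omega
    obtain ⟨t, ht⟩ := List.take_prefix (k₀ + 1) s
    have hw : N.WalkFrom N.root (p ++ s) := hl.1
    have hw1 : N.WalkFrom N.root ((p ++ r) ++ t) := by
      rw [List.append_assoc, hrdef, ht]; exact hw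
    have hwp₁ : N.WalkFrom N.root (p ++ r) := (walkFrom_append.mp hw1).1
    have hp₁tv : N.IsTreeVert (endOf N.root (p ++ r)) := by
      rcases hk₀ with h1 | h2
      · have hrs : r = s := by rw [hrdef, h1, List.take_length]
        rw [hrs]; exact hl.2
      · exact h2
    have hp₁ : p ++ r ∈ N.unfoldVerts := ⟨hwp₁, hp₁tv⟩
    have harc : 0 < (N.unfoldNet X).arcs p (p ++ r) := by
      rw [unfold_arcs_pos_iff]
      refine ⟨hp, hp₁, r, List.ne_nil_of_length_pos (by rw [hrlen]; omega), rfl, ?_⟩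
      intro a ha
      rw [List.mem_iff_getElem] at ha
      obtain ⟨i, hi, hget⟩ := ha
      have hlen2 : r.dropLast.length = k₀ := by rw [List.length_dropLast, hrlen]; omega
      have hik : i < k₀ := by omega
      have his : i < s.length := by omega
      have hga : a = s[i]'his := by
        rw [← hget, List.getElem_dropLast]
        exact List.getElem_take
      have hnP := Nat.find_min hPex (m := i) (by omega)
      push_neg at hnP
      have hend : endOf N.root (p ++ s.take (i + 1)) = (s[i]'his).2.1 := by
        rw [endOf_append]
        exact endOf_take_succ his
      have hmem2 : (s[i]'his) ∈ p ++ s :=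
        List.mem_append_right _ (List.getElem_mem his)
      have hok2 := hw.2.1 _ hmem2
      have hv : (s[i]'his).2.1 ∈ N.verts := hok2.2.1
      rw [hga]
      refine ⟨hv, ?_⟩
      have hnt := hnP.2
      rw [hend] at hnt
      by_contra hcon
      push_neg at hcon
      exact hnt ⟨hv, by omega⟩
    obtain ⟨L, hLw, hLe⟩ := ih (p ++ r) (p ++ s) hp₁ hl
      ⟨t, by rw [List.append_assoc, hrdef, ht]⟩
      (by
        simp only [List.length_append, hrlen]
        have : (p ++ s).length ≤ p.length + (n + 1) := hlen
        simp only [List.length_append] at this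
        omega)
    refine ⟨(p, p ++ r, 0) :: L, ?_, ?_⟩
    · rw [walkFrom_cons]
      exact ⟨hp, rfl, ⟨hp, hp₁, by simpa using harc⟩, hLw⟩
    · rw [endOf_cons]; exact hLe

lemma belowSet_unfold (X : Set V) (hN : N.IsPseudoDAG) {p : List (Arc V)}
    (hp : p ∈ N.unfoldVerts) :
    (N.unfoldNet X).belowSet p = {l | l ∈ N.unfoldVerts ∧ p <+: l} := by
  ext l
  constructor
  · rintro ⟨L, hw, he⟩
    exact mem_below_unfold hp hw he
  · rintro ⟨hl, hpre⟩
    exact reaches_of_prefix X hN l.length p l hp hl hpre (by omega)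

end Net

end Phylo

namespace Phylo

variable {V : Type u}

namespace LNet

variable {L : Type v} {V' : Type w} {V'' : Type*}

lemma mulIsoVia_symm {M : LNet V L} {M' : LNet V' L} {η : V → V'} (hr : M.root ∈ M.verts)
    (h : MulIsoVia M M' η) : MulIso M' M := by
  haveI hne : Nonempty V := ⟨M.root⟩
  obtain ⟨hbij, harcs, hroot, hlab⟩ := h
  refine ⟨Function.invFunOn η M.verts, ?_⟩
  have hinv := hbij.invOn_invFunOn
  set g := Function.invFunOn η M.verts with hg
  have hgmap : ∀ u' ∈ M'.verts, g u' ∈ M.verts := fun u' hu' =>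
    hbij.surjOn.mapsTo_invFunOn hu'
  refine ⟨Set.BijOn.symm hinv.symm hbij, ?_, ?_, ?_⟩
  · intro u' hu' w' hw'
    have h2 := harcs (g u') (hgmap _ hu') (g w') (hgmap _ hw')
    rw [hinv.2 hu', hinv.2 hw'] at h2
    exact h2.symm
  · rw [← hroot, hinv.1 hr]
  · intro x
    have heq : Set.EqOn (g ∘ η) id (M.lab x ∩ M.verts) := fun a ha => hinv.1 ha.2
    rw [← hlab x, ← Set.image_comp, Set.EqOn.image_eq heq, Set.image_id]

lemma mulIsoVia_trans {M : LNet V L} {M' : LNet V' L} {M'' : LNet V'' L}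
    {η : V → V'} {η' : V' → V''} (h : MulIsoVia M M' η) (h' : MulIsoVia M' M'' η') :
    MulIsoVia M M'' (η' ∘ η) := by
  obtain ⟨hb, ha, hr, hl⟩ := h
  obtain ⟨hb', ha', hr', hl'⟩ := h'
  refine ⟨hb'.comp hb, ?_, ?_, ?_⟩
  · intro u hu w hw
    have h2 := ha' (η u) (hb.mapsTo hu) (η w) (hb.mapsTo hw)
    simp only [Function.comp_apply]
    rw [h2, ha u hu w hw]
  · show η' (η M.root) = M''.root
    rw [hr, hr']
  · intro x
    rw [Set.image_comp, hl x, hl' x]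

lemma mulIso_symm {M : LNet V L} {M' : LNet V' L} (hr : M.root ∈ M.verts)
    (h : MulIso M M') : MulIso M' M := by
  obtain ⟨η, hη⟩ := h
  exact mulIsoVia_symm hr hη

lemma mulIso_trans {M : LNet V L} {M' : LNet V' L} {M'' : LNet V'' L}
    (h : MulIso M M') (h' : MulIso M' M'') : MulIso M M'' := by
  obtain ⟨η, hη⟩ := h
  obtain ⟨η', hη'⟩ := h'
  exact ⟨_, mulIsoVia_trans hη hη'⟩

lemma sim_refl (M : LNet V L) (u : V) : M.Sim u u := Or.inl rfl

lemma subAt_root_mem {M : LNet V L} {u : V} (hu : u ∈ M.verts) :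
    (M.subAt u).root ∈ (M.subAt u).verts :=
  Net.reaches_refl hu

lemma sim_symm {M : LNet V L} {u w : V} (hu : u ∈ M.verts) (h : M.Sim u w) :
    M.Sim w u := by
  rcases h with rfl | h
  · exact Or.inl rfl
  · exact Or.inr (mulIso_symm (subAt_root_mem hu) h)

lemma sim_trans {M : LNet V L} {u w z : V} (h1 : M.Sim u w) (h2 : M.Sim w z) :
    M.Sim u z := by
  rcases h1 with rfl | h1
  · exact h2
  · rcases h2 with rfl | h2
    · exact Or.inr h1
    · exact Or.inr (mulIso_trans h1 h2)

lemma mem_eqClass_self {M : LNet V L} {u : V} (hu : u ∈ M.verts) : u ∈ M.eqClass u :=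
  ⟨hu, sim_refl M u⟩

lemma eqClass_eq_of_sim {M : LNet V L} {u w : V} (hu : u ∈ M.verts)
    (h : M.Sim u w) : M.eqClass u = M.eqClass w := by
  ext a
  simp only [eqClass, Set.mem_setOf_eq]
  exact ⟨fun ⟨ha, hs⟩ => ⟨ha, sim_trans hs h⟩,
    fun ⟨ha, hs⟩ => ⟨ha, sim_trans hs (sim_symm hu h)⟩⟩

lemma eqClass_eq_of_mem {M : LNet V L} {u w : V} (h : u ∈ M.eqClass w) :
    M.eqClass u = M.eqClass w :=
  eqClass_eq_of_sim h.1 h.2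

lemma eqClass_subset_verts (M : LNet V L) (w : V) : M.eqClass w ⊆ M.verts :=
  fun _ h => h.1

end LNet

namespace Net

variable {N : Net V} {X : Set V}

lemma append_mem_unfoldVerts {p q : List (Arc V)}
    (hq : q ∈ N.unfoldVerts) (he : endOf N.root p = endOf N.root q)
    {s : List (Arc V)} (hs : p ++ s ∈ N.unfoldVerts) : q ++ s ∈ N.unfoldVerts := by
  obtain ⟨hw, htv⟩ := hs
  rw [walkFrom_append] at hw
  refine ⟨walkFrom_append.mpr ⟨hq.1, by rw [← he]; exact hw.2⟩, ?_⟩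
  rwa [endOf_append, ← he, ← endOf_append]

lemma mulIsoVia_of_endOf_eq (X : Set V) (hN : N.IsPseudoDAG)
    {p q : List (Arc V)} (hp : p ∈ N.unfoldVerts) (hq : q ∈ N.unfoldVerts)
    (he : endOf N.root p = endOf N.root q) :
    LNet.MulIsoVia ((N.unfoldNet X).subAt p) ((N.unfoldNet X).subAt q)
      (fun l => q ++ l.drop p.length) := by
  set M := N.unfoldNet X with hMdef
  set η : List (Arc V) → List (Arc V) := fun l => q ++ l.drop p.length with hηdef
  have hbp : M.belowSet p = {l | l ∈ N.unfoldVerts ∧ p <+: l} := belowSet_unfold X hN hp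
  have hbq : M.belowSet q = {l | l ∈ N.unfoldVerts ∧ q <+: l} := belowSet_unfold X hN hq
  have hqs : ∀ {s : List (Arc V)}, p ++ s ∈ N.unfoldVerts → q ++ s ∈ N.unfoldVerts :=
    fun h => append_mem_unfoldVerts hq he h
  have hps : ∀ {s : List (Arc V)}, q ++ s ∈ N.unfoldVerts → p ++ s ∈ N.unfoldVerts :=
    fun h => append_mem_unfoldVerts hp he.symm h
  have hηval : ∀ s : List (Arc V), η (p ++ s) = q ++ s := fun s => by
    rw [hηdef]; simp only [List.drop_left]
  have hdecomp : ∀ {l : List (Arc V)}, l ∈ M.belowSet p →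
      ∃ s, p ++ s = l ∧ p ++ s ∈ N.unfoldVerts := by
    intro l hl
    rw [hbp] at hl
    obtain ⟨hlu, s, hsl⟩ := hl
    exact ⟨s, hsl, hsl ▸ hlu⟩
  have hdecompq : ∀ {l : List (Arc V)}, l ∈ M.belowSet q →
      ∃ s, q ++ s = l ∧ q ++ s ∈ N.unfoldVerts := by
    intro l hl
    rw [hbq] at hl
    obtain ⟨hlu, s, hsl⟩ := hl
    exact ⟨s, hsl, hsl ▸ hlu⟩
  have hmapsto : ∀ {l : List (Arc V)}, l ∈ M.belowSet p → η l ∈ M.belowSet q := by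
    intro l hl
    obtain ⟨s, rfl, hsu⟩ := hdecomp hl
    rw [hηval s, hbq]
    exact ⟨hqs hsu, List.prefix_append q s⟩
  have hverts_p : (M.subAt p).verts = M.belowSet p := rfl
  have hverts_q : (M.subAt q).verts = M.belowSet q := rfl
  refine ⟨⟨?_, ?_, ?_⟩, ?_, ?_, ?_⟩
  · -- MapsTo
    intro l hl
    exact hmapsto hl
  · -- InjOn
    intro l1 h1 l2 h2 heq
    obtain ⟨s1, rfl, -⟩ := hdecomp h1
    obtain ⟨s2, rfl, -⟩ := hdecomp h2
    rw [hηval s1, hηval s2] at heq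
    rw [List.append_cancel_left heq]
  · -- SurjOn
    intro m hm
    obtain ⟨s, rfl, hsu⟩ := hdecompq hm
    refine ⟨p ++ s, ?_, hηval s⟩
    rw [hverts_p, hbp]
    exact ⟨hps hsu, List.prefix_append p s⟩
  · -- arcs
    intro l1 h1 l2 h2
    obtain ⟨s1, rfl, hu1⟩ := hdecomp h1
    obtain ⟨s2, rfl, hu2⟩ := hdecomp h2
    have e1 : (M.subAt p).arcs (p ++ s1) (p ++ s2) = M.arcs (p ++ s1) (p ++ s2) :=
      if_pos ⟨h1, h2⟩
    have e2 : (M.subAt q).arcs (η (p ++ s1)) (η (p ++ s2)) =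
        M.arcs (q ++ s1) (q ++ s2) := by
      rw [hηval s1, hηval s2]
      exact if_pos ⟨hηval s1 ▸ hmapsto h1, hηval s2 ▸ hmapsto h2⟩
    rw [e1, e2]
    have hiff : 0 < M.arcs (q ++ s1) (q ++ s2) ↔ 0 < M.arcs (p ++ s1) (p ++ s2) := by
      rw [hMdef, unfold_arcs_pos_iff, unfold_arcs_pos_iff]
      constructor
      · rintro ⟨-, -, r, hr, hqq, hh⟩
        rw [List.append_assoc] at hqq
        have hsr := List.append_cancel_left hqq
        exact ⟨hu1, hu2, r, hr, by rw [hsr, List.append_assoc], hh⟩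
      · rintro ⟨-, -, r, hr, hqq, hh⟩
        rw [List.append_assoc] at hqq
        have hsr := List.append_cancel_left hqq
        exact ⟨hqs hu1, hqs hu2, r, hr, by rw [hsr, List.append_assoc], hh⟩
    have b1 := unfold_arcs_le_one (N := N) (X := X) (q ++ s1) (q ++ s2)
    have b2 := unfold_arcs_le_one (N := N) (X := X) (p ++ s1) (p ++ s2)
    rw [hMdef] at e1 e2 ⊢
    by_cases h0 : 0 < (N.unfoldNet X).arcs (p ++ s1) (p ++ s2)
    · have := hiff.mpr (by rw [hMdef]; exact h0)
      rw [hMdef] at this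
      omega
    · have : ¬ 0 < (N.unfoldNet X).arcs (q ++ s1) (q ++ s2) := by
        intro hc
        exact h0 (by have := hiff.mp (by rw [hMdef]; exact hc); rwa [hMdef] at this)
      omega
  · -- root
    show η p = q
    rw [hηdef]
    simp [List.drop_length]
  · -- labels
    intro x
    show η '' ((M.lab x ∩ M.belowSet p) ∩ M.belowSet p) =
      (M.lab x ∩ M.belowSet q) ∩ M.belowSet q
    rw [Set.inter_assoc, Set.inter_self, Set.inter_assoc, Set.inter_self]
    by_cases hx : x ∈ X
    · ext m
      simp only [Set.mem_image, Set.mem_inter_iff]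
      constructor
      · rintro ⟨l, ⟨hlab, hbel⟩, rfl⟩
        obtain ⟨s, rfl, hsu⟩ := hdecomp hbel
        rw [hηval s]
        rw [hMdef, unfold_lab_mem hx] at hlab
        refine ⟨?_, ?_⟩
        · rw [hMdef, unfold_lab_mem hx]
          refine ⟨hqs hsu, ?_⟩
          rw [endOf_append, ← he, ← endOf_append]
          exact hlab.2
        · rw [hbq]; exact ⟨hqs hsu, List.prefix_append q s⟩
      · rintro ⟨hlab, hbel⟩
        obtain ⟨s, rfl, hsu⟩ := hdecompq hbel
        refine ⟨p ++ s, ⟨?_, ?_⟩, hηval s⟩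
        · rw [hMdef, unfold_lab_mem hx] at hlab ⊢
          refine ⟨hps hsu, ?_⟩
          rw [endOf_append, he, ← endOf_append]
          exact hlab.2
        · rw [hbp]; exact ⟨hps hsu, List.prefix_append p s⟩
    · have hempty : M.lab x = ∅ := by rw [hMdef]; exact unfold_lab_off hx
      rw [hempty]
      simp

lemma sim_of_endOf_eq (X : Set V) (hN : N.IsPseudoDAG)
    {p q : List (Arc V)} (hp : p ∈ N.unfoldVerts) (hq : q ∈ N.unfoldVerts)
    (he : endOf N.root p = endOf N.root q) :
    (N.unfoldNet X).Sim p q :=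
  Or.inr ⟨_, mulIsoVia_of_endOf_eq X hN hp hq he⟩

end Net

end Phylo

namespace Phylo

variable {V : Type u}

namespace Net

lemma inDeg_transfer {W : Type*} {N : Net V} {N' : Net W} {g : V → W}
    (hiso : NetIsoVia N N' g) (hfin : N.verts.Finite) (hfin' : N'.verts.Finite)
    (hmem : ∀ u v, N.arcs u v ≠ 0 → u ∈ N.verts ∧ v ∈ N.verts)
    (hmem' : ∀ u v, N'.arcs u v ≠ 0 → u ∈ N'.verts ∧ v ∈ N'.verts)
    {v : V} (hv : v ∈ N.verts) : N'.inDeg (g v) = N.inDeg v := by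
  classical
  obtain ⟨hbij, harcs, -⟩ := hiso
  unfold inDeg
  have hs' : (Function.support fun u => N'.arcs u (g v)) ⊆ ↑hfin'.toFinset := by
    intro u hu; rw [Set.Finite.coe_toFinset]; exact (hmem' u (g v) hu).1
  have hs : (Function.support fun u => N.arcs u v) ⊆ ↑hfin.toFinset := by
    intro u hu; rw [Set.Finite.coe_toFinset]; exact (hmem u v hu).1
  rw [finsum_eq_finset_sum_of_support_subset _ hs',
    finsum_eq_finset_sum_of_support_subset _ hs]
  have himg : hfin'.toFinset = hfin.toFinset.image g := by
    apply Finset.ext; intro w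
    rw [Finset.mem_image]
    simp only [Set.Finite.mem_toFinset]
    constructor
    · intro hw
      obtain ⟨u, hu, hgu⟩ := hbij.surjOn hw
      exact ⟨u, hu, hgu⟩
    · rintro ⟨u, hu, rfl⟩; exact hbij.mapsTo hu
  rw [himg, Finset.sum_image (by
    intro a ha b hb hab
    exact hbij.injOn (by simpa using ha) (by simpa using hb) hab)]
  apply Finset.sum_congr rfl
  intro u hu
  exact harcs u (by simpa using hu) v hv

end Net

namespace LNet

variable {L : Type v}

lemma isClassOf_eq_classSet (M : LNet V L) : {c | M.IsClassOf c} = M.classSet := by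
  ext c
  simp only [IsClassOf, classSet, Set.mem_image, Set.mem_setOf_eq]
  constructor
  · rintro ⟨w, hw, rfl⟩; exact ⟨w, hw, rfl⟩
  · rintro ⟨w, hw, rfl⟩; exact ⟨w, hw, rfl⟩

lemma foldUp_arcs_mem (M : LNet V L) :
    ∀ a b, M.foldUp.arcs a b ≠ 0 → a ∈ M.foldUp.verts ∧ b ∈ M.foldUp.verts := by
  rintro (d | d) (c | c) h
  · have hcond : M.IsClassOf d ∧ M.IsClassOf c ∧ ¬M.ClassHyb c ∧ M.IsParentClassOf d c := by
      by_contra hc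
      exact h (by show (if _ then _ else 0) = 0; rw [if_neg hc])
    exact ⟨Set.mem_union_left _ ⟨d, hcond.1, rfl⟩, Set.mem_union_left _ ⟨c, hcond.2.1, rfl⟩⟩
  · have hcond : M.IsClassOf d ∧ M.IsClassOf c ∧ M.ClassHyb c ∧ M.IsParentClassOf d c := by
      by_contra hc
      exact h (by show (if _ then _ else 0) = 0; rw [if_neg hc])
    exact ⟨Set.mem_union_left _ ⟨d, hcond.1, rfl⟩,
      Set.mem_union_right _ ⟨c, ⟨hcond.2.1, hcond.2.2.1⟩, rfl⟩⟩
  · have hcond : c = d ∧ M.IsClassOf d ∧ M.ClassHyb d := by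
      by_contra hc
      exact h (by show (if _ then _ else 0) = 0; rw [if_neg hc])
    obtain ⟨rfl, h1, h2⟩ := hcond
    exact ⟨Set.mem_union_right _ ⟨c, ⟨h1, h2⟩, rfl⟩, Set.mem_union_left _ ⟨c, h1, rfl⟩⟩
  · exact absurd rfl h

lemma foldUp_verts_finite {M : LNet V L} (hfin : M.verts.Finite) :
    M.foldUp.verts.Finite := by
  have h1 : {c | M.IsClassOf c}.Finite := by
    rw [isClassOf_eq_classSet]; exact hfin.image _
  exact (h1.image _).union ((h1.subset fun c hc => hc.1).image _)

end LNet

namespace Net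

variable {N : Net V} {X : Set V}

lemma ne_nil_of_mem_hybClass (X : Set V) (hN : N.IsPseudoDAG) (hroot : N.inDeg N.root = 0)
    {c : Set (List (Arc V))} (hhyb : (N.unfoldNet X).ClassHyb c)
    {m : List (Arc V)} (hm : m ∈ c) : m ≠ [] := by
  obtain ⟨w₀, hw₀v, hceq, u₀, harc₀, hlt⟩ := hhyb
  rintro rfl
  subst hceq
  have hsim : (N.unfoldNet X).Sim [] w₀ := hm.2
  have hnilv : [] ∈ N.unfoldVerts := nil_mem_unfoldVerts hN hroot
  have hfinU : N.unfoldVerts.Finite := unfoldVerts_finite hN.finite hN.acyclic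
  have hw0nil : w₀ = [] := by
    rcases hsim with h | h
    · exact h.symm
    · obtain ⟨η, hbij, -, -, -⟩ := h
      have hbij' : Set.BijOn η ((N.unfoldNet X).belowSet [])
          ((N.unfoldNet X).belowSet w₀) := hbij
      have hb0 : (N.unfoldNet X).belowSet [] = N.unfoldVerts := by
        rw [belowSet_unfold X hN hnilv]
        exact Set.ext fun l => ⟨fun h => h.1, fun h => ⟨h, List.nil_prefix⟩⟩
      have hsub : (N.unfoldNet X).belowSet w₀ ⊆ N.unfoldVerts := by
        rw [belowSet_unfold X hN hw₀v]; exact fun l hl => hl.1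
      have hcard : ((N.unfoldNet X).belowSet w₀).ncard = N.unfoldVerts.ncard := by
        rw [← hbij'.image_eq, Set.ncard_image_of_injOn hbij'.injOn, hb0]
      have hEq : (N.unfoldNet X).belowSet w₀ = N.unfoldVerts :=
        Set.eq_of_subset_of_ncard_le hsub (by rw [hcard]) hfinU
      have : ([] : List (Arc V)) ∈ (N.unfoldNet X).belowSet w₀ := hEq ▸ hnilv
      rw [belowSet_unfold X hN hw₀v] at this
      exact List.prefix_nil.mp this.2
  rw [hw0nil] at harc₀
  rw [unfold_arcs_pos_iff] at harc₀
  obtain ⟨-, -, r, hr, hnil, -⟩ := harc₀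
  exact hr (List.append_eq_nil_iff.mp hnil.symm).2

lemma exists_parent (X : Set V) (hN : N.IsPseudoDAG) (hroot : N.inDeg N.root = 0)
    {m : List (Arc V)} (hm : m ∈ N.unfoldVerts) (hne : m ≠ []) :
    ∃ u, 0 < (N.unfoldNet X).arcs u m := by
  obtain ⟨L, hw, he⟩ := reaches_of_prefix X hN m.length [] m
    (nil_mem_unfoldVerts hN hroot) hm List.nil_prefix (by simp)
  have hL : L ≠ [] := by rintro rfl; exact hne he.symm
  have hmem : L.getLastD ([], [], 0) ∈ L := getLastD_mem _ hL
  have hok := hw.2.1 _ hmem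
  refine ⟨(L.getLastD ([], [], 0)).1, ?_⟩
  have hEq : (L.getLastD ([], [], 0)).2.1 = m := he
  rw [← hEq]
  exact Nat.lt_of_le_of_lt (Nat.zero_le _) hok.2.2

lemma two_le_inDeg_inr (X : Set V) (hN : N.IsPseudoDAG) (hroot : N.inDeg N.root = 0)
    {c : Set (List (Arc V))} (hc : (N.unfoldNet X).IsClassOf c)
    (hhyb : (N.unfoldNet X).ClassHyb c) :
    2 ≤ (N.unfoldNet X).foldUp.inDeg (Sum.inr c) := by
  classical
  set M := N.unfoldNet X with hM
  have hfinU : N.unfoldVerts.Finite := unfoldVerts_finite hN.finite hN.acyclic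
  have hfinM : M.verts.Finite := hfinU
  have hCfin : {d : Set (List (Arc V)) | M.IsClassOf d}.Finite := by
    rw [LNet.isClassOf_eq_classSet]; exact hfinM.image _
  have hsupp : (Function.support fun a => M.foldUp.arcs a (Sum.inr c)).Finite := by
    apply Set.Finite.subset (hCfin.image Sum.inl)
    intro a ha
    rw [Function.mem_support] at ha
    rcases a with d | d
    · refine ⟨d, ?_, rfl⟩
      by_contra hd
      apply ha
      show (if _ then _ else 0) = 0
      rw [if_neg]
      rintro ⟨h1, -⟩; exact hd h1
    · exact absurd rfl ha
  have hID : M.foldUp.inDeg (Sum.inr c) = ∑ᶠ a, M.foldUp.arcs a (Sum.inr c) := rfl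
  obtain ⟨w₀, hw₀v, hceq, u₀, harc₀, hlt⟩ := id hhyb
  have hcsub : c ⊆ M.verts := hceq ▸ LNet.eqClass_subset_verts M w₀
  have hcfin : c.Finite := hfinM.subset hcsub
  have hw₀c : w₀ ∈ c := by rw [hceq]; exact LNet.mem_eqClass_self hw₀v
  have hu₀v : u₀ ∈ M.verts := (unfold_arcs_pos_iff.mp harc₀).1
  set d₀ := M.eqClass u₀ with hd₀
  have hd₀fin : d₀.Finite := hfinM.subset (LNet.eqClass_subset_verts M u₀)
  have harcs_le : ∀ u w : List (Arc V), M.arcs u w ≤ 1 := unfold_arcs_le_one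
  have hbdd : ∀ d : Set (List (Arc V)), BddAbove {n | ∃ u ∈ d, n = ∑ᶠ w ∈ c, M.arcs u w} := by
    intro d
    refine ⟨c.ncard, ?_⟩
    rintro n ⟨u, hu, rfl⟩
    exact finsum_mem_le_ncard _ hcfin (fun w => harcs_le u w)
  have hcnt_le : ∀ {d : Set (List (Arc V))} {u}, u ∈ d →
      (∑ᶠ w ∈ c, M.arcs u w) ≤ M.childMult d c := fun {d u} hu =>
    le_csSup (hbdd d) ⟨u, hu, rfl⟩
  have hparentclass : ∀ {u w : List (Arc V)}, w ∈ c → 0 < M.arcs u w →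
      M.IsParentClassOf (M.eqClass u) c := by
    intro u w hw harc
    refine ⟨u, w, harc, rfl, ?_⟩
    have hw' : w ∈ M.eqClass w₀ := by rw [← hceq]; exact hw
    exact hceq.trans (LNet.eqClass_eq_of_mem hw').symm
  have harcval : ∀ {d : Set (List (Arc V))}, M.IsClassOf d → M.IsParentClassOf d c →
      M.foldUp.arcs (Sum.inl d) (Sum.inr c) = M.childMult d c := by
    intro d h1 h2
    show (if _ then _ else 0) = _
    rw [if_pos ⟨h1, hc, hhyb, h2⟩]
  have hcnt1 : ∀ {u w : List (Arc V)}, w ∈ c → 0 < M.arcs u w →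
      1 ≤ ∑ᶠ w' ∈ c, M.arcs u w' := by
    intro u w hw harc
    calc 1 ≤ M.arcs u w := harc
    _ ≤ _ := finsum_mem_single_le _ hcfin hw
  have hinle : ∀ a, M.foldUp.arcs a (Sum.inr c) ≤ M.foldUp.inDeg (Sum.inr c) := by
    intro a
    rw [hID]
    exact single_le_finsum a hsupp (fun j => Nat.zero_le _)
  by_cases hb : ∃ w₁ ∈ c, ∃ u₁, 0 < M.arcs u₁ w₁ ∧ M.eqClass u₁ ≠ d₀
  · obtain ⟨w₁, hw₁c, u₁, harc₁, hne₁⟩ := hb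
    have hu₁v : u₁ ∈ M.verts := (unfold_arcs_pos_iff.mp harc₁).1
    have h1 : M.foldUp.arcs (Sum.inl d₀) (Sum.inr c) = M.childMult d₀ c :=
      harcval ⟨u₀, hu₀v, rfl⟩ (hparentclass hw₀c harc₀)
    have h2 : M.foldUp.arcs (Sum.inl (M.eqClass u₁)) (Sum.inr c) =
        M.childMult (M.eqClass u₁) c :=
      harcval ⟨u₁, hu₁v, rfl⟩ (hparentclass hw₁c harc₁)
    have hc1 : 1 ≤ M.childMult d₀ c :=
      le_trans (hcnt1 hw₀c harc₀) (hcnt_le (LNet.mem_eqClass_self hu₀v))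
    have hc2 : 1 ≤ M.childMult (M.eqClass u₁) c :=
      le_trans (hcnt1 hw₁c harc₁) (hcnt_le (LNet.mem_eqClass_self hu₁v))
    have hsum := finsum_two_le (fun a => M.foldUp.arcs a (Sum.inr c)) hsupp
      (a := Sum.inl d₀) (b := Sum.inl (M.eqClass u₁)) (by simpa using hne₁.symm)
    have hsum' : M.foldUp.arcs (Sum.inl d₀) (Sum.inr c) +
        M.foldUp.arcs (Sum.inl (M.eqClass u₁)) (Sum.inr c) ≤
        ∑ᶠ a, M.foldUp.arcs a (Sum.inr c) := hsum
    rw [h1, h2] at hsum'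
    rw [hID]
    omega
  · push_neg at hb
    by_cases hb2 : ∃ u ∈ d₀, 2 ≤ ∑ᶠ w ∈ c, M.arcs u w
    · obtain ⟨u, hu, h2u⟩ := hb2
      have h1 : M.foldUp.arcs (Sum.inl d₀) (Sum.inr c) = M.childMult d₀ c :=
        harcval ⟨u₀, hu₀v, rfl⟩ (hparentclass hw₀c harc₀)
      have := hinle (Sum.inl d₀)
      have h3 : 2 ≤ M.childMult d₀ c := le_trans h2u (hcnt_le hu)
      omega
    · push_neg at hb2
      exfalso
      have hpar : ∀ m, m ∈ c → ∃ u, 0 < M.arcs u m := fun m hm =>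
        exists_parent X hN hroot (hcsub hm)
          (ne_nil_of_mem_hybClass X hN hroot hhyb hm)
      set φ : List (Arc V) → List (Arc V) :=
        fun m => if h : ∃ u, 0 < M.arcs u m then h.choose else [] with hφdef
      have hφ : ∀ m ∈ c, 0 < M.arcs (φ m) m := by
        intro m hm
        have h := hpar m hm
        simp only [hφdef, dif_pos h]
        exact h.choose_spec
      have hφd : ∀ m ∈ c, φ m ∈ d₀ := by
        intro m hm
        have h1 := hb m hm (φ m) (hφ m hm)
        have h2 : φ m ∈ M.verts := (unfold_arcs_pos_iff.mp (hφ m hm)).1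
        rw [← h1]
        exact LNet.mem_eqClass_self h2
      have hinj : Set.InjOn φ c := by
        intro m1 h1 m2 h2 heq
        by_contra hne
        have htwo : M.arcs (φ m1) m1 + M.arcs (φ m1) m2 ≤
            ∑ᶠ w ∈ c, M.arcs (φ m1) w :=
          finsum_mem_two_le (fun w => M.arcs (φ m1) w) hcfin h1 h2 hne
        have hle := hb2 (φ m1) (hφd m1 h1)
        have ha1 : 0 < M.arcs (φ m1) m1 := hφ m1 h1
        have ha2 : 0 < M.arcs (φ m1) m2 := by rw [heq]; exact hφ m2 h2
        omega
      have hcard := Set.ncard_le_ncard_of_injOn φ hφd hinj hd₀fin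
      omega

end Net

end Phylo

namespace Phylo

/-- Let `N` be a stable phylogenetic network on `X`.  Then
the map `κ_N : V⁻(N) → V(U(N))/∼`, sending a tree vertex `w` of `N` to the
common value of `p_{U(N)}(Ψ_N(P))` over all paths `P ∈ π⁻(N)` ending at `w`,
is a well-defined bijection from the set of tree vertices of `N` onto
`V(U(N))/∼`.  (In this formalization `Ψ_N` is the identity on paths and the
quotient `V(U(N))/∼` is the set of `∼`-equivalence classes.) -/
theorem kappa_welldefined_bijection {V : Type u} (X : Set V) (N : Net V)
    (hX : 3 ≤ X.ncard) (h : IsStable N X) :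
    ∃ κ : V → Set (List (Arc V)),
      Set.BijOn κ {v | N.IsTreeVert v} (Net.unfoldNet N X).classSet ∧
        ∀ p ∈ (Net.unfoldNet N X).verts,
          κ (Net.endOf N.root p) = (Net.unfoldNet N X).eqClass p := by
  classical
  obtain ⟨hphylo, g, hiso, hgx⟩ := h
  have hN : N.IsPseudoDAG := hphylo.toIsXNetwork.toIsPseudoDAG
  have hroot : N.inDeg N.root = 0 := hphylo.toIsXNetwork.rootInDeg
  set M := Net.unfoldNet N X with hM
  have hfinU : N.unfoldVerts.Finite := Net.unfoldVerts_finite hN.finite hN.acyclic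
  set P : V → Prop := fun v => ∃ p, p ∈ N.unfoldVerts ∧ Net.endOf N.root p = v with hP
  set κ : V → Set (List (Arc V)) :=
    fun v => if h : P v then M.eqClass h.choose else ∅ with hκ
  have hwd : ∀ p ∈ N.unfoldVerts, κ (Net.endOf N.root p) = M.eqClass p := by
    intro p hp
    have hPp : P (Net.endOf N.root p) := ⟨p, hp, rfl⟩
    have hch := hPp.choose_spec
    simp only [hκ, dif_pos hPp]
    exact LNet.eqClass_eq_of_sim hch.1 (Net.sim_of_endOf_eq X hN hch.1 hp hch.2)
  have hmaps : ∀ w ∈ {v | N.IsTreeVert v}, κ w ∈ M.classSet := by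
    intro w hw
    obtain ⟨l, hwl, hel⟩ := hN.connected w hw.1
    have hl : l ∈ N.unfoldVerts := ⟨hwl, by rw [hel]; exact hw⟩
    rw [← hel, hwd l hl]
    exact ⟨l, hl, rfl⟩
  have hsurj : Set.SurjOn κ {v | N.IsTreeVert v} M.classSet := by
    rintro c ⟨p, hp, rfl⟩
    exact ⟨Net.endOf N.root p, hp.2, hwd p hp⟩
  have htreefin : {v | N.IsTreeVert v}.Finite := hN.finite.subset fun v hv => hv.1
  have hhybfin : {v | N.IsHybrid v}.Finite := hN.finite.subset fun v hv => hv.1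
  have hclfin : M.classSet.Finite := hfinU.image _
  have hAfin : {c | M.IsClassOf c}.Finite := by
    rw [LNet.isClassOf_eq_classSet]; exact hclfin
  have hBfin : {c | M.IsClassOf c ∧ M.ClassHyb c}.Finite := hAfin.subset fun c hc => hc.1
  have hFfin : M.foldUp.verts.Finite := LNet.foldUp_verts_finite hfinU
  have hsplit : {v | N.IsTreeVert v} ∪ {v | N.IsHybrid v} = N.verts := by
    ext v
    constructor
    · rintro (h | h)
      exacts [h.1, h.1]
    · intro hv
      rcases Nat.lt_or_ge (N.inDeg v) 2 with h | h
      · exact Or.inl ⟨hv, by omega⟩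
      · exact Or.inr ⟨hv, h⟩
  have hdisj : Disjoint {v | N.IsTreeVert v} {v | N.IsHybrid v} := by
    rw [Set.disjoint_left]
    rintro v ⟨-, h1⟩ ⟨-, h2⟩
    omega
  have hcard1 : N.verts.ncard = {v | N.IsTreeVert v}.ncard + {v | N.IsHybrid v}.ncard := by
    rw [← hsplit, Set.ncard_union_eq hdisj htreefin hhybfin]
  have hFsplit : M.foldUp.verts.ncard =
      {c | M.IsClassOf c}.ncard + {c | M.IsClassOf c ∧ M.ClassHyb c}.ncard := by
    show ((Sum.inl '' _) ∪ (Sum.inr '' _)).ncard = _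
    rw [Set.ncard_union_eq (by
        rw [Set.disjoint_left]
        rintro a ⟨c, -, rfl⟩ ⟨c', -, hc⟩
        cases hc)
      (hAfin.image _) (hBfin.image _),
      Set.ncard_image_of_injective _ Sum.inl_injective,
      Set.ncard_image_of_injective _ Sum.inr_injective]
  have hcard2 : N.verts.ncard = M.foldUp.verts.ncard := by
    rw [← hiso.1.image_eq, Set.ncard_image_of_injOn hiso.1.injOn]
  have hBinj : {c | M.IsClassOf c ∧ M.ClassHyb c}.ncard ≤ {v | N.IsHybrid v}.ncard := by
    have hex : ∀ c ∈ {c | M.IsClassOf c ∧ M.ClassHyb c},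
        ∃ v ∈ N.verts, g v = Sum.inr c := by
      intro c hc
      have hmem : (Sum.inr c : Set (List (Arc V)) ⊕ Set (List (Arc V))) ∈
          M.foldUp.verts := Set.mem_union_right _ ⟨c, hc, rfl⟩
      obtain ⟨v, hv, hgv⟩ := hiso.1.surjOn hmem
      exact ⟨v, hv, hgv⟩
    set ψ : Set (List (Arc V)) → V :=
      fun c => if h : ∃ v ∈ N.verts, g v = Sum.inr c then h.choose else N.root with hψ
    apply Set.ncard_le_ncard_of_injOn ψ ?_ ?_ hhybfin
    · intro c hc
      have hx := hex c hc
      have hspec := hx.choose_spec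
      simp only [hψ, dif_pos hx]
      refine ⟨hspec.1, ?_⟩
      have hdeg : M.foldUp.inDeg (g hx.choose) = N.inDeg hx.choose :=
        Net.inDeg_transfer hiso hN.finite hFfin (fun u v h0 => hN.arcMem u v h0)
          (LNet.foldUp_arcs_mem M) hspec.1
      rw [hspec.2] at hdeg
      have h2 : 2 ≤ M.foldUp.inDeg (Sum.inr c) :=
        Net.two_le_inDeg_inr X hN hroot hc.1 hc.2
      omega
    · intro c1 h1 c2 h2 heq
      have s1 := (hex c1 h1).choose_spec
      have s2 := (hex c2 h2).choose_spec
      simp only [hψ, dif_pos (hex c1 h1), dif_pos (hex c2 h2)] at heq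
      have hinr : (Sum.inr c1 : Set (List (Arc V)) ⊕ Set (List (Arc V))) = Sum.inr c2 := by
        rw [← s1.2, ← s2.2, heq]
      exact Sum.inr_injective hinr
  have htle : {v | N.IsTreeVert v}.ncard ≤ M.classSet.ncard := by
    have hAeq : {c | M.IsClassOf c}.ncard = M.classSet.ncard := by
      rw [LNet.isClassOf_eq_classSet]
    omega
  have hinj : Set.InjOn κ {v | N.IsTreeVert v} := by
    intro a ha b hb heq
    by_contra hne
    have hsurj2 : M.classSet ⊆ κ '' ({v | N.IsTreeVert v} \ {a}) := by
      intro c hcm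
      obtain ⟨w, hw, rfl⟩ := hsurj hcm
      rcases eq_or_ne w a with rfl | hwa
      · exact ⟨b, ⟨hb, by simp only [Set.mem_singleton_iff]; exact fun hh => hne hh.symm⟩,
          heq.symm⟩
      · exact ⟨w, ⟨hw, by simp only [Set.mem_singleton_iff]; exact hwa⟩, rfl⟩
    have h1 : M.classSet.ncard ≤ (κ '' ({v | N.IsTreeVert v} \ {a})).ncard :=
      Set.ncard_le_ncard hsurj2 ((htreefin.subset Set.diff_subset).image _)
    have h2 : (κ '' ({v | N.IsTreeVert v} \ {a})).ncard ≤
        ({v | N.IsTreeVert v} \ {a}).ncard :=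
      Set.ncard_image_le (htreefin.subset Set.diff_subset)
    have h3 : ({v | N.IsTreeVert v} \ {a}).ncard = {v | N.IsTreeVert v}.ncard - 1 :=
      Set.ncard_diff_singleton_of_mem ha
    have h4 : 0 < {v | N.IsTreeVert v}.ncard := (Set.ncard_pos htreefin).mpr ⟨a, ha⟩
    omega
  exact ⟨κ, ⟨hmaps, hinj, hsurj⟩, hwd⟩

end Phylo
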